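/- Let H be a Hopf algebra over a commutative ring k with antipode S, and let R ∈ H ⊗ H be a quasi-triangular structure, i.e., R is invertible, R·Δ(x) = (τ∘Δ)(x)·R for all x ∈ H, (Δ⊗id)(R) = R₁₃·R₂₃, and (id⊗Δ)(R) = R₁₃·R₁₂. Define u := μ((S ⊗ id)(τ(R))) ∈ H, i.e., u = m(S ⊗ 1)(R₂₁) where R₂₁ = τ(R) and μ : H ⊗ H → H is the multiplication map. Then u·x = S(S(x))·u for every x ∈ H; in particular, when u is invertible the square of the antipode is the inner automorphism S²(x) = u x u⁻¹. -/

import Mathlib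

/-! Let `F(a ⊗ b) = S(b) a`, so that `u = F(R)`. Since `S` is an anti-homomorphism,
`F(Δᵒᵖ(x) w) = ε(x) F(w)`, hence `R Δ(a) = Δᵒᵖ(a) R` gives `F(R Δ(a)) = ε(a) u`.
Now evaluate `Ψ(w ⊗ c) = S²(c) F(R w)` on both sides of coassociativity
`(Δ ⊗ id) Δ x = (id ⊗ Δ) Δ x`: on the left the previous identity yields `S²(x) u`; on the
right `F(R (a ⊗ b)) = S(b) u a` turns `Ψ(a ⊗ Δ d)` into `S(d₁ S(d₂)) u a = ε(d) u a`, which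
yields `u x`. -/

open scoped TensorProduct

variable (k H : Type*) [CommRing k] [Ring H] [HopfAlgebra k H]

/-- The algebra homomorphism `φ₁₂ : H ⊗ H → H ⊗ H ⊗ H`, `a ⊗ b ↦ a ⊗ b ⊗ 1`. -/
noncomputable def phi12 : H ⊗[k] H →ₐ[k] H ⊗[k] (H ⊗[k] H) :=
  Algebra.TensorProduct.map (AlgHom.id k H) Algebra.TensorProduct.includeLeft

/-- The algebra homomorphism `φ₁₃ : H ⊗ H → H ⊗ H ⊗ H`, `a ⊗ b ↦ a ⊗ 1 ⊗ b`. -/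
noncomputable def phi13 : H ⊗[k] H →ₐ[k] H ⊗[k] (H ⊗[k] H) :=
  Algebra.TensorProduct.map (AlgHom.id k H) Algebra.TensorProduct.includeRight

/-- The algebra homomorphism `φ₂₃ : H ⊗ H → H ⊗ H ⊗ H`, `a ⊗ b ↦ 1 ⊗ a ⊗ b`. -/
noncomputable def phi23 : H ⊗[k] H →ₐ[k] H ⊗[k] (H ⊗[k] H) :=
  Algebra.TensorProduct.includeRight

/-- The algebra homomorphism `Δ ⊗ id : H ⊗ H → H ⊗ H ⊗ H` (composed with the canonical
associativity identification). -/
noncomputable def comulTensorId : H ⊗[k] H →ₐ[k] H ⊗[k] (H ⊗[k] H) :=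
  (Algebra.TensorProduct.assoc k k k H H H).toAlgHom.comp
    (Algebra.TensorProduct.map (Bialgebra.comulAlgHom k H) (AlgHom.id k H))

/-- The algebra homomorphism `id ⊗ Δ : H ⊗ H → H ⊗ H ⊗ H`. -/
noncomputable def idTensorComul : H ⊗[k] H →ₐ[k] H ⊗[k] (H ⊗[k] H) :=
  Algebra.TensorProduct.map (AlgHom.id k H) (Bialgebra.comulAlgHom k H)

/-- The Drinfel'd element `u = m((S ⊗ id)(R₂₁)) = μ((S ⊗ id)(τ(R)))` of a
quasi-triangular Hopf algebra. -/
noncomputable def drinfeldU (R : H ⊗[k] H) : H :=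
  LinearMap.mul' k H
    ((TensorProduct.map (HopfAlgebra.antipode (R := k)) LinearMap.id)
      ((TensorProduct.comm k H H) R))

namespace HopfAlgebra

open TensorProduct Coalgebra

variable {R A : Type*} [CommSemiring R] [Semiring A] [HopfAlgebra R A]

variable (R A) in
noncomputable def mulAntipodeFlip : A ⊗[R] A →ₗ[R] A :=
  LinearMap.mul' R A ∘ₗ map (antipode R) LinearMap.id ∘ₗ
    (TensorProduct.comm R A A).toLinearMap

@[simp]
lemma mulAntipodeFlip_tmul (a b : A) :
    mulAntipodeFlip R A (a ⊗ₜ b) = antipode R b * a := by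
  simp [mulAntipodeFlip]

lemma mulAntipodeFlip_mul_tmul (w : A ⊗[R] A) (x y : A) :
    mulAntipodeFlip R A (w * x ⊗ₜ y) = antipode R y * mulAntipodeFlip R A w * x := by
  induction w using TensorProduct.induction_on with
  | zero => simp
  | tmul a b => simp [antipode_mul_antidistrib, mul_assoc]
  | add w₁ w₂ h₁ h₂ => simp only [add_mul, map_add, h₁, h₂, mul_add]

lemma mulAntipodeFlip_comm_comul (x : A) :
    mulAntipodeFlip R A (TensorProduct.comm R A A (comul x)) = algebraMap R A (counit x) := by
  rw [← mul_antipode_rTensor_comul_apply]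
  induction comul (R := R) x using TensorProduct.induction_on with
  | zero => simp
  | tmul a b => simp
  | add t₁ t₂ h₁ h₂ => simp only [map_add, h₁, h₂]

lemma mulAntipodeFlip_comm_comul_mul (x : A) (w : A ⊗[R] A) :
    mulAntipodeFlip R A (TensorProduct.comm R A A (comul x) * w) =
      counit (R := R) x • mulAntipodeFlip R A w := by
  induction w using TensorProduct.induction_on with
  | zero => simp
  | tmul a b =>
    rw [mulAntipodeFlip_mul_tmul, mulAntipodeFlip_comm_comul, mulAntipodeFlip_tmul,
      Algebra.smul_def, mul_assoc, Algebra.left_comm]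
  | add w₁ w₂ h₁ h₂ => simp only [mul_add, map_add, h₁, h₂, smul_add]

lemma antipode_algebraMap (c : R) : antipode R (algebraMap R A c) = algebraMap R A c := by
  rw [Algebra.algebraMap_eq_smul_one, map_smul, antipode_one]

variable (R A) in
noncomputable def antipodeSqMulFlip (r : A ⊗[R] A) : (A ⊗[R] A) ⊗[R] A →ₗ[R] A :=
  LinearMap.mul' R A ∘ₗ
    map (antipode R ∘ₗ antipode R) (mulAntipodeFlip R A ∘ₗ LinearMap.mulLeft R r) ∘ₗ
    (TensorProduct.comm R _ A).toLinearMap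

@[simp]
lemma antipodeSqMulFlip_tmul (r w : A ⊗[R] A) (c : A) :
    antipodeSqMulFlip R A r (w ⊗ₜ c) =
      antipode R (antipode R c) * mulAntipodeFlip R A (r * w) := by
  simp [antipodeSqMulFlip]

lemma antipodeSqMulFlip_assoc_symm_tmul (r : A ⊗[R] A) (a : A) (y : A ⊗[R] A) :
    antipodeSqMulFlip R A r ((TensorProduct.assoc R A A A).symm (a ⊗ₜ y)) =
      antipode R (LinearMap.mul' R A (LinearMap.lTensor A (antipode R) y)) *
        mulAntipodeFlip R A r * a := by
  induction y using TensorProduct.induction_on with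
  | zero => simp
  | tmul b c => simp [mulAntipodeFlip_mul_tmul, antipode_mul_antidistrib, mul_assoc]
  | add y₁ y₂ h₁ h₂ => simp only [tmul_add, map_add, h₁, h₂, add_mul]

lemma antipodeSqMulFlip_assoc_symm_lTensor_comul (r : A ⊗[R] A) (x : A) :
    antipodeSqMulFlip R A r
        ((TensorProduct.assoc R A A A).symm (LinearMap.lTensor A comul (comul x))) =
      mulAntipodeFlip R A r * x := by
  suffices ∀ t : A ⊗[R] A,
      antipodeSqMulFlip R A r
          ((TensorProduct.assoc R A A A).symm (LinearMap.lTensor A comul t)) =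
        mulAntipodeFlip R A r * TensorProduct.rid R A (LinearMap.lTensor A counit t) by
    simpa using this (comul x)
  intro t
  induction t using TensorProduct.induction_on with
  | zero => simp
  | tmul a d =>
    simp [antipodeSqMulFlip_assoc_symm_tmul, antipode_algebraMap, Algebra.smul_def,
      Algebra.commutes, mul_assoc]
  | add t₁ t₂ h₁ h₂ => simp only [map_add, h₁, h₂, mul_add]

lemma antipodeSqMulFlip_rTensor_comul {r : A ⊗[R] A}
    (hr : ∀ x : A, r * comul x = TensorProduct.comm R A A (comul x) * r) (x : A) :
    antipodeSqMulFlip R A r (LinearMap.rTensor A comul (comul x)) =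
      antipode R (antipode R x) * mulAntipodeFlip R A r := by
  suffices ∀ t : A ⊗[R] A,
      antipodeSqMulFlip R A r (LinearMap.rTensor A comul t) =
        antipode R (antipode R (TensorProduct.lid R A (LinearMap.rTensor A counit t))) *
          mulAntipodeFlip R A r by
    simpa using this (comul x)
  intro t
  induction t using TensorProduct.induction_on with
  | zero => simp
  | tmul d c => simp [hr, mulAntipodeFlip_comm_comul_mul]
  | add t₁ t₂ h₁ h₂ => simp only [map_add, h₁, h₂, add_mul]

theorem mulAntipodeFlip_mul_eq_antipode_antipode_mul {r : A ⊗[R] A}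
    (hr : ∀ x : A, r * comul x = TensorProduct.comm R A A (comul x) * r) (x : A) :
    mulAntipodeFlip R A r * x = antipode R (antipode R x) * mulAntipodeFlip R A r := by
  rw [← antipodeSqMulFlip_assoc_symm_lTensor_comul, coassoc_symm_apply,
    antipodeSqMulFlip_rTensor_comul hr]

end HopfAlgebra

theorem drinfeldU_conjugates_antipode_sq (R : H ⊗[k] H)
    (h1 : ∀ x : H, R * Bialgebra.comulAlgHom k H x =
      (Algebra.TensorProduct.comm k H H) (Bialgebra.comulAlgHom k H x) * R) :
    (∀ x : H, drinfeldU k H R * x =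
        HopfAlgebra.antipode (R := k) (HopfAlgebra.antipode (R := k) x) * drinfeldU k H R) ∧
    (∀ v : H, drinfeldU k H R * v = 1 → v * drinfeldU k H R = 1 →
      ∀ x : H, HopfAlgebra.antipode (R := k) (HopfAlgebra.antipode (R := k) x) =
        drinfeldU k H R * x * v) := by
  have hu (x : H) : drinfeldU k H R * x =
      HopfAlgebra.antipode (R := k) (HopfAlgebra.antipode (R := k) x) * drinfeldU k H R :=
    HopfAlgebra.mulAntipodeFlip_mul_eq_antipode_antipode_mul h1 x
  refine ⟨hu, fun v huv _ x => ?_⟩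
  rw [hu, mul_assoc, huv, mul_one]
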